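/- arXiv:1110.6634 — 2 statements merged into one kernel-verified Lean document; each statement's English description precedes it below -/
import Mathlib

section
/- Let A, B be matrices (or bounded operators), u: [0,T] → ℝ piecewise constant, Υ_t the propagator of ψ' = (A + u(t)B)ψ and X(t,s) the propagator of the compressed system x' = (π_N A π_N + u π_N B π_N)x, with X(t,s) unitary. Then for any ψ₀, π_N Υ_t ψ₀ = X(t,0)π_N ψ₀ + ∫₀^t u(s) X(t,s) π_N B (Id − π_N) Υ_s ψ₀ ds. -/
/-!
Write `L(t) = PAP + u(t) PBP` for the generator of `X` and `g = PB(1 - P)Υ`. Since `P` is an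
idempotent commuting with `A`, `PΥ` solves the compressed equation with forcing,
`w(t) = Pψ₀ + ∫₀ᵗ (L(r) w(r) + u(r) g(r)) dr`. The right-hand side of the formula solves the same
equation: expand `X(t,s) = 1 + ∫ₛᵗ L(r) X(r,s) dr` under the integral and exchange the order of
integration over the triangle `0 ≤ s ≤ r ≤ t`. Two continuous solutions of a linear Volterra
equation with integrable coefficient agree by a Grönwall argument. As `u` is only integrable, it
is run on short intervals on which `∫ ‖L‖ ≤ 1/2`: there a maximum point `t₀` of a function with
`g(t) ≤ c + ∫ ‖L‖ g` satisfies `g(t₀) ≤ c + g(t₀) / 2`. The same estimate rules out blow-up of `Υ`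
before `T`, so `(A + uB)Υ` is integrable on `[0, T]` (its integral is not the junk value `0`) and
`Υ` is continuous.
-/

open MeasureTheory Set Filter Topology intervalIntegral

theorem IntervalIntegrable.mono_Icc {E : Type*} [NormedAddCommGroup E] {f : ℝ → E}
    {a b c d : ℝ} (hf : IntervalIntegrable f volume a b) (hc : c ∈ Icc a b) (hd : d ∈ Icc a b) :
    IntervalIntegrable f volume c d :=
  hf.mono_set (uIcc_subset_uIcc (Icc_subset_uIcc hc) (Icc_subset_uIcc hd))

theorem eventually_nhdsGT_integral_lt {a : ℝ → ℝ} {x b ε : ℝ}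
    (ha : IntervalIntegrable a volume x b) (hxb : x < b) (hε : 0 < ε) :
    ∀ᶠ y in 𝓝[>] x, ∫ r in x..y, a r < ε := by
  have hc := (continuousOn_primitive_interval' ha left_mem_uIcc x left_mem_uIcc
    ).mono_of_mem_nhdsWithin (s := Ioi x) (by rw [uIcc_of_le hxb.le]; exact Icc_mem_nhdsGT hxb)
  exact hc.tendsto.eventually_lt_const (by rwa [integral_same])

theorem eventually_nhdsLT_integral_lt {a : ℝ → ℝ} {b x ε : ℝ}
    (ha : IntervalIntegrable a volume b x) (hbx : b < x) (hε : 0 < ε) :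
    ∀ᶠ y in 𝓝[<] x, ∫ r in y..x, a r < ε := by
  have hc := (continuousOn_primitive_interval_left ((intervalIntegrable_iff' (f := a)).1 ha) x
    right_mem_uIcc).mono_of_mem_nhdsWithin (s := Iio x)
    (by rw [uIcc_of_le hbx.le]; exact Icc_mem_nhdsLT hbx)
  exact hc.tendsto.eventually_lt_const (by rwa [integral_same])

theorem le_two_mul_of_le_add_integral_mul {a g : ℝ → ℝ} {p q c : ℝ} (hpq : p ≤ q)
    (ha : IntervalIntegrable a volume p q) (ha0 : ∀ r ∈ Icc p q, 0 ≤ a r)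
    (ha_half : ∫ r in p..q, a r ≤ 1 / 2) (hg : ContinuousOn g (Icc p q))
    (hg0 : ∀ t ∈ Icc p q, 0 ≤ g t) (hle : ∀ t ∈ Icc p q, g t ≤ c + ∫ r in p..t, a r * g r) :
    ∀ t ∈ Icc p q, g t ≤ 2 * c := by
  obtain ⟨t₀, ht₀, hmax⟩ := isCompact_Icc.exists_isMaxOn (nonempty_Icc.2 hpq) hg
  have ha₀ : IntervalIntegrable a volume p t₀ := ha.mono_Icc (left_mem_Icc.2 hpq) ht₀
  have hint : ∫ r in p..t₀, a r * g r ≤ 1 / 2 * g t₀ := calc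
    ∫ r in p..t₀, a r * g r ≤ ∫ r in p..t₀, a r * g t₀ := by
      refine integral_mono_on ht₀.1 (ha₀.mul_continuousOn (hg.mono ?_)) (ha₀.mul_const _)
        fun r hr => mul_le_mul_of_nonneg_left (hmax ⟨hr.1, hr.2.trans ht₀.2⟩)
          (ha0 r ⟨hr.1, hr.2.trans ht₀.2⟩)
      exact uIcc_subset_Icc (left_mem_Icc.2 hpq) ht₀
    _ = (∫ r in p..t₀, a r) * g t₀ := integral_mul_const _ _
    _ ≤ (∫ r in p..q, a r) * g t₀ := by
      refine mul_le_mul_of_nonneg_right (integral_mono_interval le_rfl ht₀.1 ht₀.2 ?_ ha)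
        (hg0 t₀ ht₀)
      filter_upwards [ae_restrict_mem measurableSet_Ioc] with r hr
      exact ha0 r (Ioc_subset_Icc_self hr)
    _ ≤ 1 / 2 * g t₀ := mul_le_mul_of_nonneg_right ha_half (hg0 t₀ ht₀)
  intro t ht
  linarith [isMaxOn_iff.1 hmax t ht, hle t₀ ht₀]

theorem eqOn_zero_of_le_integral_mul {a g : ℝ → ℝ} {T : ℝ}
    (ha : IntervalIntegrable a volume 0 T) (ha0 : ∀ r ∈ Icc 0 T, 0 ≤ a r)
    (hg : ContinuousOn g (Icc 0 T)) (hg0 : ∀ t ∈ Icc 0 T, 0 ≤ g t)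
    (hle : ∀ t ∈ Icc 0 T, g t ≤ ∫ r in 0..t, a r * g r) : EqOn g 0 (Icc 0 T) := by
  rcases lt_or_ge T 0 with hT | hT
  · simp [Icc_eq_empty_of_lt hT]
  set G : ℝ → ℝ := fun t => ∫ r in 0..t, a r * g r
  have hag : IntervalIntegrable (fun r => a r * g r) volume 0 T :=
    ha.mul_continuousOn (by rwa [uIcc_of_le hT])
  have hGc : ContinuousOn G (Icc 0 T) := by
    simpa [uIcc_of_le hT] using continuousOn_primitive_interval' hag left_mem_uIcc
  suffices hG : Icc 0 T ⊆ G ⁻¹' {0} from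
    fun t ht => le_antisymm ((hle t ht).trans_eq (hG ht)) (hg0 t ht)
  refine IsClosed.Icc_subset_of_forall_mem_nhdsWithin ?_ (by simp [G]) ?_
  · rw [inter_comm]; exact hGc.preimage_isClosed_of_isClosed isClosed_Icc isClosed_singleton
  rintro x ⟨hGx, hx0, hxT⟩
  obtain ⟨y, hy_half, hxy, hyT⟩ := ((eventually_nhdsGT_integral_lt
    (ha.mono_Icc ⟨hx0, hxT.le⟩ (right_mem_Icc.2 hT)) hxT one_half_pos).and
    (Ioo_mem_nhdsGT hxT)).exists
  have hxyT : Icc x y ⊆ Icc 0 T := Icc_subset_Icc hx0 hyT.le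
  have hG_eq : ∀ t ∈ Icc x y, G t = ∫ r in x..t, a r * g r := fun t ht => by
    rw [mem_preimage, mem_singleton_iff] at hGx
    rw [← zero_add (∫ r in x..t, a r * g r), ← hGx, integral_add_adjacent_intervals
      (hag.mono_Icc (left_mem_Icc.2 hT) ⟨hx0, hxT.le⟩) (hag.mono_Icc ⟨hx0, hxT.le⟩ (hxyT ht))]
  have hg_zero : ∀ t ∈ Icc x y, g t = 0 := by
    have hle' := le_two_mul_of_le_add_integral_mul (c := 0) hxy.le
      (ha.mono_Icc ⟨hx0, hxT.le⟩ (hxyT (right_mem_Icc.2 hxy.le))) (fun r hr => ha0 r (hxyT hr))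
      hy_half.le (hg.mono hxyT) (fun r hr => hg0 r (hxyT hr))
      fun t ht => by rw [zero_add, ← hG_eq t ht]; exact hle t (hxyT ht)
    exact fun t ht => le_antisymm (by simpa using hle' t ht) (hg0 t (hxyT ht))
  refine mem_of_superset (Icc_mem_nhdsGT hxy) fun t ht => ?_
  rw [mem_preimage, mem_singleton_iff, hG_eq t ht]
  refine integral_zero_ae (ae_of_all _ fun r hr => ?_)
  rw [uIoc_of_le ht.1] at hr
  rw [hg_zero r ⟨hr.1.le, hr.2.trans ht.2⟩, mul_zero]

theorem continuousOn_of_norm_sub_le_integral {E : Type*} [SeminormedAddCommGroup E]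
    {f : ℝ → E} {ω : ℝ → ℝ} {a b : ℝ} (hω : IntervalIntegrable ω volume a b)
    (h : ∀ x ∈ Icc a b, ∀ y ∈ Icc a b, ‖f x - f y‖ ≤ |∫ r in y..x, ω r|) :
    ContinuousOn f (Icc a b) := by
  rcases lt_or_ge b a with hba | hab
  · simp [Icc_eq_empty_of_lt hba]
  rw [← uIcc_of_le hab] at h ⊢
  intro x hx
  have hprim := (continuousOn_primitive_interval' hω hx x hx).tendsto.abs
  rw [integral_same, abs_zero] at hprim
  rw [ContinuousWithinAt, tendsto_iff_norm_sub_tendsto_zero]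
  exact squeeze_zero' (Eventually.of_forall fun _ => norm_nonneg _)
    (eventually_nhdsWithin_of_forall fun y hy => h y hy x hx) hprim

theorem integral_integral_triangle_swap {E : Type*} [NormedAddCommGroup E] [NormedSpace ℝ E]
    {a b : ℝ} (hab : a ≤ b) {Φ : ℝ → ℝ → E}
    (hΦ : IntegrableOn (Function.uncurry Φ) (Ioc a b ×ˢ Ioc a b)) :
    ∫ s in a..b, ∫ r in s..b, Φ r s = ∫ r in a..b, ∫ s in a..r, Φ r s := by
  set Ψ : ℝ → ℝ → E := fun s r => if s < r then Φ r s else 0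
  have hΨ : IntegrableOn (Function.uncurry Ψ) (uIoc a b ×ˢ uIoc a b) := by
    have hswap : IntegrableOn (fun p : ℝ × ℝ => Φ p.2 p.1) (Ioc a b ×ˢ Ioc a b) := by
      rw [IntegrableOn, Measure.volume_eq_prod, ← Measure.prod_restrict] at hΦ ⊢
      exact hΦ.swap
    rw [uIoc_of_le hab]
    refine (hswap.indicator (measurableSet_lt measurable_fst measurable_snd)).congr_fun
      (fun p _ => ?_) (measurableSet_Ioc.prod measurableSet_Ioc)
    simp only [indicator_apply]
    rfl
  have hleft : ∀ s ∈ uIcc a b, ∫ r in a..b, Ψ s r = ∫ r in s..b, Φ r s := fun s hs => by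
    rw [uIcc_of_le hab] at hs
    have : (fun r => Ψ s r) = (Ioi s).indicator (fun r => Φ r s) := by
      ext r; simp [Ψ, indicator_apply]
    rw [this, integral_of_le hab, integral_of_le hs.2, setIntegral_indicator measurableSet_Ioi,
      Ioc_inter_Ioi, sup_of_le_right hs.1]
  have hright : ∀ r ∈ uIcc a b, ∫ s in a..b, Ψ s r = ∫ s in a..r, Φ r s := fun r hr => by
    rw [uIcc_of_le hab] at hr
    have : (fun s => Ψ s r) = (Iio r).indicator (fun s => Φ r s) := by
      ext s; simp [Ψ, indicator_apply]
    have hIoo : Ioc a b ∩ Iio r = Ioo a r := by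
      ext x
      exact ⟨fun ⟨⟨h1, _⟩, h3⟩ => ⟨h1, h3⟩, fun ⟨h1, h3⟩ => ⟨⟨h1, h3.le.trans hr.2⟩, h3⟩⟩
    rw [this, integral_of_le hab, integral_of_le hr.1, setIntegral_indicator measurableSet_Iio,
      hIoo, integral_Ioc_eq_integral_Ioo]
  calc ∫ s in a..b, ∫ r in s..b, Φ r s = ∫ s in a..b, ∫ r in a..b, Ψ s r :=
        integral_congr fun s hs => (hleft s hs).symm
    _ = ∫ r in a..b, ∫ s in a..b, Ψ s r := intervalIntegral_intervalIntegral_swap hΨ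
    _ = ∫ r in a..b, ∫ s in a..r, Φ r s := integral_congr hright

section ClmApply

variable {𝕜 : Type*} [RCLike 𝕜] {E F : Type*} [NormedAddCommGroup E] [NormedSpace 𝕜 E]
  [NormedAddCommGroup F] [NormedSpace 𝕜 F] {a b : ℝ}

theorem IntervalIntegrable.clm_apply_continuousOn {L : ℝ → E →L[𝕜] F} {v : ℝ → E}
    (hL : IntervalIntegrable L volume a b) (hv : ContinuousOn v (uIcc a b)) :
    IntervalIntegrable (fun r => L r (v r)) volume a b := by
  obtain ⟨C, hC⟩ := isCompact_uIcc.exists_bound_of_continuousOn hv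
  rw [intervalIntegrable_iff] at hL ⊢
  exact (ContinuousLinearMap.id 𝕜 (E →L[𝕜] F)).integrable_of_bilin_of_bdd_right C hL
    ((hv.mono uIoc_subset_uIcc).aestronglyMeasurable measurableSet_uIoc)
    (ae_restrict_of_forall_mem measurableSet_uIoc fun r hr => hC r (uIoc_subset_uIcc hr))

theorem ContinuousOn.intervalIntegrable_clm_apply {K : ℝ → E →L[𝕜] F} {v : ℝ → E}
    (hK : ContinuousOn K (uIcc a b)) (hv : IntervalIntegrable v volume a b) :
    IntervalIntegrable (fun r => K r (v r)) volume a b := by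
  obtain ⟨C, hC⟩ := isCompact_uIcc.exists_bound_of_continuousOn hK
  rw [intervalIntegrable_iff] at hv ⊢
  exact (ContinuousLinearMap.id 𝕜 (E →L[𝕜] F)).integrable_of_bilin_of_bdd_left C
    ((hK.mono uIoc_subset_uIcc).aestronglyMeasurable measurableSet_uIoc)
    (ae_restrict_of_forall_mem measurableSet_uIoc fun r hr => hC r (uIoc_subset_uIcc hr)) hv

theorem norm_integral_clm_apply_le [NormedSpace ℝ F] {L : ℝ → E →L[𝕜] F} {v : ℝ → E}
    (hab : a ≤ b) (hL : IntervalIntegrable L volume a b) (hv : ContinuousOn v (Icc a b)) :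
    ‖∫ r in a..b, L r (v r)‖ ≤ ∫ r in a..b, ‖L r‖ * ‖v r‖ :=
  norm_integral_le_of_norm_le hab (ae_of_all _ fun r _ => (L r).le_opNorm (v r))
    (hL.norm.mul_continuousOn (by rw [uIcc_of_le hab]; exact hv.norm))

end ClmApply

section LinearIntegralEquation

variable {𝕜 : Type*} [RCLike 𝕜] {E : Type*} [NormedAddCommGroup E] [NormedSpace 𝕜 E]
  [NormedSpace ℝ E] {L : ℝ → E →L[𝕜] E}

theorem eqOn_zero_of_eq_integral_clm_apply {d : ℝ → E} {T : ℝ}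
    (hL : IntervalIntegrable L volume 0 T) (hd : ContinuousOn d (Icc 0 T))
    (hdL : ∀ t ∈ Icc 0 T, d t = ∫ r in 0..t, L r (d r)) : EqOn d 0 (Icc 0 T) := by
  have hnorm := eqOn_zero_of_le_integral_mul hL.norm (fun _ _ => norm_nonneg _) hd.norm
    (fun _ _ => norm_nonneg _) fun t ht => (hdL t ht).symm ▸ norm_integral_clm_apply_le ht.1
      (hL.mono_Icc (left_mem_Icc.2 (ht.1.trans ht.2)) ht) (hd.mono (Icc_subset_Icc_right ht.2))
  exact fun t ht => norm_eq_zero.1 (hnorm ht)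

theorem continuousOn_of_forall_eq_add_integral {F Υ : ℝ → E} {ψ₀ : E} {T : ℝ} (hT : 0 ≤ T)
    (hF : IntervalIntegrable F volume 0 T) (hΥ : ∀ t ∈ Icc 0 T, Υ t = ψ₀ + ∫ s in 0..t, F s) :
    ContinuousOn Υ (Icc 0 T) := by
  refine (continuousOn_const.add ?_).congr hΥ
  simpa [uIcc_of_le hT] using continuousOn_primitive_interval' hF left_mem_uIcc

theorem forall_eq_add_integral_shift {F Υ : ℝ → E} {ψ₀ : E} {τ T : ℝ} (hτ : 0 ≤ τ)
    (hF : IntervalIntegrable F volume 0 T) (hΥ : ∀ t ∈ Icc 0 T, Υ t = ψ₀ + ∫ s in 0..t, F s) :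
    ∀ t ∈ Icc τ T, Υ t = Υ τ + ∫ s in τ..t, F s := fun t ht => by
  have hτT : τ ∈ Icc 0 T := ⟨hτ, ht.1.trans ht.2⟩
  rw [hΥ t ⟨hτ.trans ht.1, ht.2⟩, hΥ τ hτT, add_assoc, integral_add_adjacent_intervals
    (hF.mono_Icc (left_mem_Icc.2 (hτ.trans hτT.2)) hτT) (hF.mono_Icc hτT ⟨hτ.trans ht.1, ht.2⟩)]

theorem norm_le_two_mul_of_forall_eq_add_integral {Υ : ℝ → E} {p q : ℝ} (hpq : p ≤ q)
    (hL : IntervalIntegrable L volume p q) (hL_half : ∫ r in p..q, ‖L r‖ ≤ 1 / 2)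
    (hΥc : ContinuousOn Υ (Icc p q)) (hΥ : ∀ t ∈ Icc p q, Υ t = Υ p + ∫ s in p..t, L s (Υ s)) :
    ∀ t ∈ Icc p q, ‖Υ t‖ ≤ 2 * ‖Υ p‖ := by
  refine le_two_mul_of_le_add_integral_mul hpq hL.norm (fun _ _ => norm_nonneg _) hL_half
    hΥc.norm (fun _ _ => norm_nonneg _) fun t ht => ?_
  calc ‖Υ t‖ ≤ ‖Υ p‖ + ‖∫ s in p..t, L s (Υ s)‖ := (hΥ t ht).symm ▸ norm_add_le _ _
    _ ≤ ‖Υ p‖ + ∫ s in p..t, ‖L s‖ * ‖Υ s‖ := by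
      gcongr
      exact norm_integral_clm_apply_le ht.1 (hL.mono_Icc (left_mem_Icc.2 hpq) ht)
        (hΥc.mono (Icc_subset_Icc_right ht.2))

theorem intervalIntegrable_of_forall_lt_of_forall_eq_add_integral {Υ : ℝ → E} {ψ₀ : E}
    {σ : ℝ} (hσ : 0 < σ) (hL : IntervalIntegrable L volume 0 σ)
    (hF : ∀ t ∈ Ico 0 σ, IntervalIntegrable (fun s => L s (Υ s)) volume 0 t)
    (hΥ : ∀ t ∈ Ico 0 σ, Υ t = ψ₀ + ∫ s in 0..t, L s (Υ s)) :
    IntervalIntegrable (fun s => L s (Υ s)) volume 0 σ := by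
  obtain ⟨τ, hτ_half, hτ0, hτσ⟩ := ((eventually_nhdsLT_integral_lt hL.norm hσ one_half_pos).and
    (Ioo_mem_nhdsLT hσ)).exists
  have hΥ_le : ∀ t ∈ Ico 0 σ, ∀ s ∈ Icc 0 t, Υ s = ψ₀ + ∫ r in 0..s, L r (Υ r) :=
    fun t ht s hs => hΥ s ⟨hs.1, hs.2.trans_lt ht.2⟩
  have hΥc : ∀ t ∈ Ico 0 σ, ContinuousOn Υ (Icc 0 t) := fun t ht =>
    continuousOn_of_forall_eq_add_integral ht.1 (hF t ht) (hΥ_le t ht)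
  have hbound : ∀ t ∈ Ioo τ σ, ‖Υ t‖ ≤ 2 * ‖Υ τ‖ := fun t ht =>
    norm_le_two_mul_of_forall_eq_add_integral ht.1.le
      (hL.mono_Icc ⟨hτ0.le, hτσ.le⟩ ⟨hτ0.le.trans ht.1.le, ht.2.le⟩)
      ((integral_mono_interval le_rfl ht.1.le ht.2.le (ae_of_all _ fun _ => norm_nonneg _)
        (hL.mono_Icc ⟨hτ0.le, hτσ.le⟩ (right_mem_Icc.2 hσ.le)).norm).trans hτ_half.le)
      ((hΥc t ⟨hτ0.le.trans ht.1.le, ht.2⟩).mono (Icc_subset_Icc_left hτ0.le))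
      (forall_eq_add_integral_shift hτ0.le (hF t ⟨hτ0.le.trans ht.1.le, ht.2⟩)
        (hΥ_le t ⟨hτ0.le.trans ht.1.le, ht.2⟩))
      t (right_mem_Icc.2 ht.1.le)
  have hΥm : ContinuousOn Υ (Ioo τ σ) := fun x hx =>
    ((hΥc ((x + σ) / 2) ⟨by linarith [hτ0, hx.1], by linarith [hx.2]⟩) x
      ⟨by linarith [hτ0, hx.1], by linarith [hx.2]⟩).mono_of_mem_nhdsWithin
      (mem_nhdsWithin_of_mem_nhds (Icc_mem_nhds (hτ0.trans hx.1) (by linarith [hx.2])))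
  have hLτσ := (intervalIntegrable_iff_integrableOn_Ioo_of_le hτσ.le).1
    (hL.mono_Icc ⟨hτ0.le, hτσ.le⟩ (right_mem_Icc.2 hσ.le))
  refine (hF τ ⟨hτ0.le, hτσ⟩).trans ((intervalIntegrable_iff_integrableOn_Ioo_of_le hτσ.le).2 ?_)
  refine (hLτσ.norm.mul_const (2 * ‖Υ τ‖)).mono'
    ((ContinuousLinearMap.id 𝕜 _).aestronglyMeasurable_comp₂ hLτσ.aestronglyMeasurable
      (hΥm.aestronglyMeasurable measurableSet_Ioo))
    (ae_restrict_of_forall_mem measurableSet_Ioo fun t ht => ?_)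
  exact ((L t).le_opNorm _).trans (mul_le_mul_of_nonneg_left (hbound t ht) (norm_nonneg _))

theorem intervalIntegrable_of_forall_eq_add_integral {Υ : ℝ → E} {ψ₀ : E} {T : ℝ} (hT : 0 ≤ T)
    (hL : IntervalIntegrable L volume 0 T)
    (hΥ : ∀ t ∈ Icc 0 T, Υ t = ψ₀ + ∫ s in 0..t, L s (Υ s)) :
    IntervalIntegrable (fun s => L s (Υ s)) volume 0 T := by
  set F : ℝ → E := fun s => L s (Υ s)
  set S : Set ℝ := {t | t ∈ Icc 0 T ∧ IntervalIntegrable F volume 0 t}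
  have hS0 : (0 : ℝ) ∈ S := ⟨left_mem_Icc.2 hT, IntervalIntegrable.refl⟩
  have hSbdd : BddAbove S := ⟨T, fun t ht => ht.1.2⟩
  set σ := sSup S
  have hσ : σ ∈ Icc 0 T := ⟨le_csSup hSbdd hS0, csSup_le ⟨0, hS0⟩ fun t ht => ht.1.2⟩
  have hFσ : IntervalIntegrable F volume 0 σ := by
    rcases hσ.1.eq_or_lt with h | h
    · rw [← h]
    refine intervalIntegrable_of_forall_lt_of_forall_eq_add_integral h
      (hL.mono_Icc (left_mem_Icc.2 hT) hσ) (fun t ht => ?_)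
      fun t ht => hΥ t ⟨ht.1, ht.2.le.trans hσ.2⟩
    obtain ⟨s, hs, hts⟩ := exists_lt_of_lt_csSup ⟨0, hS0⟩ ht.2
    exact hs.2.mono_Icc (left_mem_Icc.2 hs.1.1) ⟨ht.1, hts.le⟩
  -- Past `σ` the integrand is not integrable on `[0, t]`, so the integral is `0` and `Υ t = ψ₀`.
  have hFσT : IntervalIntegrable F volume σ T := by
    rw [intervalIntegrable_iff_integrableOn_Ioo_of_le hσ.2]
    refine ((intervalIntegrable_iff_integrableOn_Ioo_of_le hσ.2).1
      ((hL.mono_Icc hσ (right_mem_Icc.2 hT)).clm_apply_continuousOn continuousOn_const)).congr_fun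
      (fun t ht => ?_) measurableSet_Ioo
    have hFt : ¬IntervalIntegrable F volume 0 t := fun h =>
      (le_csSup hSbdd ⟨⟨hσ.1.trans ht.1.le, ht.2.le⟩, h⟩).not_gt ht.1
    simp only [F, hΥ t ⟨hσ.1.trans ht.1.le, ht.2.le⟩, integral_undef hFt, add_zero]
  exact hFσ.trans hFσT

end LinearIntegralEquation

section Propagator

variable {𝕜 : Type*} [RCLike 𝕜] {E : Type*} [NormedAddCommGroup E] [NormedSpace 𝕜 E]
  [NormedSpace ℝ E]

structure IsIsometricPropagator (L : ℝ → E →L[𝕜] E) (T : ℝ) (X : ℝ → ℝ → E →L[𝕜] E) :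
    Prop where
  norm_apply : ∀ t s v, ‖X t s v‖ = ‖v‖
  comp : ∀ t s r, X t s ∘L X s r = X t r
  eq_add_integral : ∀ s v, ∀ t ∈ Icc 0 T, X t s v = v + ∫ r in s..t, L r (X r s v)

namespace IsIsometricPropagator

variable {L : ℝ → E →L[𝕜] E} {T : ℝ} {X : ℝ → ℝ → E →L[𝕜] E} {f : ℝ → E}

theorem apply_apply (hX : IsIsometricPropagator L T X) (t s r : ℝ) (v : E) :
    X t s (X s r v) = X t r v := by
  rw [← hX.comp t s r, ContinuousLinearMap.comp_apply]

theorem norm_le_one (hX : IsIsometricPropagator L T X) (t s : ℝ) : ‖X t s‖ ≤ 1 :=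
  ContinuousLinearMap.opNorm_le_bound _ zero_le_one fun v => by rw [hX.norm_apply, one_mul]

theorem norm_sub_one_le (hX : IsIsometricPropagator L T X) (hL : IntervalIntegrable L volume 0 T)
    {t s : ℝ} (ht : t ∈ Icc 0 T) (hs : s ∈ Icc 0 T) :
    ‖X t s - 1‖ ≤ |∫ r in s..t, ‖L r‖| := by
  refine ContinuousLinearMap.opNorm_le_bound _ (abs_nonneg _) fun v => ?_
  rw [sub_apply, one_apply_eq_self, hX.eq_add_integral s v t ht, add_sub_cancel_left]
  calc ‖∫ r in s..t, L r (X r s v)‖ ≤ |∫ r in s..t, ‖L r‖ * ‖v‖| :=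
        norm_integral_le_abs_of_norm_le (ae_of_all _ fun r => by
          simpa only [hX.norm_apply] using (L r).le_opNorm (X r s v))
          ((hL.mono_Icc hs ht).norm.mul_const _)
    _ = |∫ r in s..t, ‖L r‖| * ‖v‖ := by
      rw [intervalIntegral.integral_mul_const, abs_mul, abs_norm]

theorem continuousOn_fst (hX : IsIsometricPropagator L T X) (hL : IntervalIntegrable L volume 0 T)
    (s : ℝ) : ContinuousOn (fun t => X t s) (Icc 0 T) :=
  continuousOn_of_norm_sub_le_integral hL.norm fun x hx y hy => calc
    ‖X x s - X y s‖ = ‖(X x y - 1) * X y s‖ := by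
      rw [sub_mul, one_mul, ContinuousLinearMap.mul_def, hX.comp]
    _ ≤ |∫ r in y..x, ‖L r‖| * 1 :=
      norm_mul_le_of_le (hX.norm_sub_one_le hL hx hy) (hX.norm_le_one y s)
    _ = _ := mul_one _

theorem continuousOn_snd (hX : IsIsometricPropagator L T X) (hL : IntervalIntegrable L volume 0 T)
    (t : ℝ) : ContinuousOn (fun s => X t s) (Icc 0 T) :=
  continuousOn_of_norm_sub_le_integral hL.norm fun x hx y hy => calc
    ‖X t x - X t y‖ = ‖X t y * (X y x - 1)‖ := by
      rw [mul_sub, mul_one, ContinuousLinearMap.mul_def, hX.comp]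
    _ ≤ 1 * |∫ r in x..y, ‖L r‖| :=
      norm_mul_le_of_le (hX.norm_le_one t y) (hX.norm_sub_one_le hL hy hx)
    _ = _ := by rw [one_mul, integral_symm, abs_neg]

theorem intervalIntegrable_apply (hX : IsIsometricPropagator L T X)
    (hL : IntervalIntegrable L volume 0 T) (hf : IntervalIntegrable f volume 0 T) {t τ : ℝ}
    (hτ : τ ∈ Icc 0 T) : IntervalIntegrable (fun s => X t s (f s)) volume 0 τ :=
  ((hX.continuousOn_snd hL t).mono (uIcc_subset_Icc (left_mem_Icc.2 (hτ.1.trans hτ.2)) hτ)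
    ).intervalIntegrable_clm_apply (hf.mono_Icc (left_mem_Icc.2 (hτ.1.trans hτ.2)) hτ)

theorem integrableOn_uncurry_apply_apply (hX : IsIsometricPropagator L T X)
    (hL : IntervalIntegrable L volume 0 T) (hf : IntervalIntegrable f volume 0 T) {t : ℝ}
    (ht : t ∈ Icc 0 T) :
    IntegrableOn (Function.uncurry fun r s => L r (X r s (f s))) (Ioc 0 t ×ˢ Ioc 0 t) := by
  have hsub : Ioc 0 t ⊆ Icc 0 T := Ioc_subset_Icc_self.trans (Icc_subset_Icc_right ht.2)
  have hLt := (hL.mono_Icc (left_mem_Icc.2 (ht.1.trans ht.2)) ht).def'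
  have hft := (hf.mono_Icc (left_mem_Icc.2 (ht.1.trans ht.2)) ht).def'
  rw [uIoc_of_le ht.1] at hLt hft
  -- Measurability comes from the factorisation `X r s = X r 0 ∘ X 0 s`.
  have hmeas : AEStronglyMeasurable (fun p : ℝ × ℝ => L p.1 (X p.1 p.2 (f p.2)))
      ((volume.restrict (Ioc 0 t)).prod (volume.restrict (Ioc 0 t))) := by
    simpa [hX.apply_apply] using (ContinuousLinearMap.id 𝕜 (E →L[𝕜] E)).aestronglyMeasurable_comp₂
      ((ContinuousLinearMap.compL 𝕜 E E E).aestronglyMeasurable_comp₂ hLt.aestronglyMeasurable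
        (((hX.continuousOn_fst hL 0).mono hsub).aestronglyMeasurable measurableSet_Ioc)).comp_fst
      ((ContinuousLinearMap.id 𝕜 (E →L[𝕜] E)).aestronglyMeasurable_comp₂
        (((hX.continuousOn_snd hL 0).mono hsub).aestronglyMeasurable measurableSet_Ioc)
        hft.aestronglyMeasurable).comp_snd
  rw [IntegrableOn, Measure.volume_eq_prod, ← Measure.prod_restrict]
  refine (hLt.norm.mul_prod hft.norm).mono' hmeas (ae_of_all _ fun p => ?_)
  exact ((L p.1).le_opNorm _).trans_eq (by rw [hX.norm_apply])

variable [CompleteSpace E]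

theorem integral_apply_eq_apply_integral (hX : IsIsometricPropagator L T X)
    (hL : IntervalIntegrable L volume 0 T) (hf : IntervalIntegrable f volume 0 T) {t : ℝ}
    (ht : t ∈ Icc 0 T) : ∫ s in 0..t, X t s (f s) = X t 0 (∫ s in 0..t, X 0 s (f s)) := by
  simp_rw [← (X t 0).intervalIntegral_comp_comm (hX.intervalIntegrable_apply hL hf ht),
    hX.apply_apply]

theorem continuousOn_integral_apply (hX : IsIsometricPropagator L T X)
    (hL : IntervalIntegrable L volume 0 T) (hf : IntervalIntegrable f volume 0 T) (hT : 0 ≤ T) :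
    ContinuousOn (fun t => ∫ s in 0..t, X t s (f s)) (Icc 0 T) := by
  refine ((hX.continuousOn_fst hL 0).clm_apply ?_).congr
    fun t ht => hX.integral_apply_eq_apply_integral hL hf ht
  simpa [uIcc_of_le hT] using continuousOn_primitive_interval'
    (hX.intervalIntegrable_apply hL hf (right_mem_Icc.2 hT)) left_mem_uIcc

theorem integral_apply_eq (hX : IsIsometricPropagator L T X)
    (hL : IntervalIntegrable L volume 0 T) (hf : IntervalIntegrable f volume 0 T) {t : ℝ}
    (ht : t ∈ Icc 0 T) :
    ∫ s in 0..t, X t s (f s) = ∫ r in 0..t, (L r (∫ s in 0..r, X r s (f s)) + f r) := by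
  have h0t : (0 : ℝ) ∈ Icc 0 T := left_mem_Icc.2 (ht.1.trans ht.2)
  have hsub : uIcc 0 t ⊆ Icc 0 T := uIcc_subset_Icc h0t ht
  have hft := hf.mono_Icc h0t ht
  have hLm : IntervalIntegrable (fun r => L r (∫ s in 0..r, X r s (f s))) volume 0 t :=
    (hL.mono_Icc h0t ht).clm_apply_continuousOn
      ((hX.continuousOn_integral_apply hL hf (ht.1.trans ht.2)).mono hsub)
  have key : ∫ s in 0..t, (X t s (f s) - f s) = ∫ r in 0..t, L r (∫ s in 0..r, X r s (f s)) :=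
    calc ∫ s in 0..t, (X t s (f s) - f s) = ∫ s in 0..t, ∫ r in s..t, L r (X r s (f s)) :=
          integral_congr fun s _ => by rw [hX.eq_add_integral s (f s) t ht, add_sub_cancel_left]
      _ = ∫ r in 0..t, ∫ s in 0..r, L r (X r s (f s)) :=
          integral_integral_triangle_swap ht.1 (hX.integrableOn_uncurry_apply_apply hL hf ht)
      _ = ∫ r in 0..t, L r (∫ s in 0..r, X r s (f s)) := integral_congr fun r hr =>
          (L r).intervalIntegral_comp_comm (hX.intervalIntegrable_apply hL hf (hsub hr))
  rw [integral_sub (hX.intervalIntegrable_apply hL hf ht) hft] at key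
  rw [integral_add hLm hft, ← key, sub_add_cancel]

theorem eq_apply_add_integral (hX : IsIsometricPropagator L T X)
    (hL : IntervalIntegrable L volume 0 T) (hf : IntervalIntegrable f volume 0 T) {w : ℝ → E}
    {w₀ : E} (hw : ContinuousOn w (Icc 0 T))
    (hwL : ∀ t ∈ Icc 0 T, w t = w₀ + ∫ r in 0..t, (L r (w r) + f r)) :
    ∀ t ∈ Icc 0 T, w t = X t 0 w₀ + ∫ s in 0..t, X t s (f s) := by
  intro t ht
  have hT : 0 ≤ T := ht.1.trans ht.2
  set q : ℝ → E := fun t => X t 0 w₀ + ∫ s in 0..t, X t s (f s)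
  have hX₀ : ContinuousOn (fun t => X t 0 w₀) (Icc 0 T) :=
    (hX.continuousOn_fst hL 0).clm_apply continuousOn_const
  have hq : ContinuousOn q (Icc 0 T) := hX₀.add (hX.continuousOn_integral_apply hL hf hT)
  have hII : ∀ {v : ℝ → E}, ContinuousOn v (Icc 0 T) → ∀ t ∈ Icc 0 T,
      IntervalIntegrable (fun r => L r (v r) + f r) volume 0 t := fun hv t ht =>
    ((hL.mono_Icc (left_mem_Icc.2 hT) ht).clm_apply_continuousOn
      (hv.mono (uIcc_subset_Icc (left_mem_Icc.2 hT) ht))).add (hf.mono_Icc (left_mem_Icc.2 hT) ht)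
  have hqL : ∀ t ∈ Icc 0 T, q t = w₀ + ∫ r in 0..t, (L r (q r) + f r) := fun t ht => by
    simp only [q, map_add, add_assoc]
    rw [integral_add ((hL.mono_Icc (left_mem_Icc.2 hT) ht).clm_apply_continuousOn
        (hX₀.mono (uIcc_subset_Icc (left_mem_Icc.2 hT) ht)))
      (hII (hX.continuousOn_integral_apply hL hf hT) t ht),
      ← hX.integral_apply_eq hL hf ht, hX.eq_add_integral 0 w₀ t ht, add_assoc]
  have hd := eqOn_zero_of_eq_integral_clm_apply (d := w - q) hL (hw.sub hq) fun t ht => by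
    rw [Pi.sub_apply, hwL t ht, hqL t ht, add_sub_add_left_eq_sub,
      ← integral_sub (hII hw t ht) (hII hq t ht)]
    simp only [Pi.sub_apply, map_sub, add_sub_add_right_eq_sub]
  exact sub_eq_zero.1 (hd ht)

end IsIsometricPropagator

end Propagator

theorem proj_apply_eq_add_integral_compress {E : Type*} [NormedAddCommGroup E]
    [NormedSpace ℂ E] [CompleteSpace E] {A B P : E →L[ℂ] E} {u : ℝ → ℝ} {T : ℝ} {ψ₀ : E}
    {Υ : ℝ → E} (hP : P ∘L P = P) (hPA : P ∘L A = A ∘L P)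
    (hF : IntervalIntegrable (fun s => A (Υ s) + u s • B (Υ s)) volume 0 T)
    (hΥ : ∀ t ∈ Icc 0 T, Υ t = ψ₀ + ∫ s in 0..t, (A (Υ s) + u s • B (Υ s))) :
    ∀ t ∈ Icc 0 T, P (Υ t) = P ψ₀ + ∫ s in 0..t,
      ((P ∘L A ∘L P + u s • (P ∘L B ∘L P)) (P (Υ s)) + u s • (P ∘L B ∘L (1 - P)) (Υ s)) := by
  have hPP (v : E) : P (P v) = P v := congr($hP v)
  have hPA' (v : E) : P (A v) = A (P v) := congr($hPA v)
  intro t ht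
  rw [hΥ t ht, map_add, ← P.intervalIntegral_comp_comm
    (hF.mono_Icc (left_mem_Icc.2 (ht.1.trans ht.2)) ht)]
  congr 1
  refine integral_congr fun s _ => ?_
  simp only [add_apply, FunLike.coe_smul, Pi.smul_apply, ContinuousLinearMap.coe_comp,
    Function.comp_apply, FunLike.coe_sub, Pi.sub_apply, one_apply_eq_self, map_add, map_sub,
    ContinuousLinearMap.map_smul_of_tower, hPP, hPA']
  module

open MeasureTheory in
theorem stmt8_general {H : Type*} [NormedAddCommGroup H] [InnerProductSpace ℂ H] [CompleteSpace H]
    (A B : H →L[ℂ] H) (u : ℝ → ℝ) (T : ℝ) (hT : 0 ≤ T)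
    (hu : IntervalIntegrable u volume 0 T)
    (P : H →L[ℂ] H) (hP1 : P ∘L P = P)
    (hPA : P ∘L A = A ∘L P)
    (ψ₀ : H) (Υ : ℝ → H)
    (hΥ : ∀ t ∈ Set.Icc (0:ℝ) T,
      Υ t = ψ₀ + ∫ s in (0:ℝ)..t, (A (Υ s) + u s • B (Υ s)))
    (X : ℝ → ℝ → (H →L[ℂ] H))
    (hXunit : ∀ t s : ℝ, ∀ ψ : H, ‖X t s ψ‖ = ‖ψ‖)
    (hXcoc : ∀ t s r : ℝ, (X t s) ∘L (X s r) = X t r)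
    (hX : ∀ s : ℝ, ∀ ψ : H, ∀ t ∈ Set.Icc (0:ℝ) T,
      X t s ψ = ψ + ∫ r in s..t,
        ((P ∘L A ∘L P) (X r s ψ) + u r • (P ∘L B ∘L P) (X r s ψ))) :
    ∀ t ∈ Set.Icc (0:ℝ) T,
      P (Υ t) = X t 0 (P ψ₀)
        + ∫ s in (0:ℝ)..t, u s • (X t s ((P ∘L B ∘L (1 - P)) (Υ s))) := by
  have hF := intervalIntegrable_of_forall_eq_add_integral (L := fun s => A + u s • B) hT
    (intervalIntegrable_const.add (hu.smul_continuousOn continuousOn_const)) hΥ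
  have hΥc := continuousOn_of_forall_eq_add_integral hT hF hΥ
  have hXprop : IsIsometricPropagator (fun r => P ∘L A ∘L P + u r • (P ∘L B ∘L P)) T X :=
    ⟨hXunit, hXcoc, hX⟩
  have hf : IntervalIntegrable (fun s => u s • (P ∘L B ∘L (1 - P)) (Υ s)) volume 0 T :=
    hu.smul_continuousOn ((P ∘L B ∘L (1 - P)).continuous.comp_continuousOn
      (by rwa [uIcc_of_le hT]))
  have hw := hXprop.eq_apply_add_integral (w := fun t => P (Υ t))
    (intervalIntegrable_const.add (hu.smul_continuousOn continuousOn_const)) hf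
    (P.continuous.comp_continuousOn hΥc) (proj_apply_eq_add_integral_compress hP1 hPA hF hΥ)
  intro t ht
  rw [hw t ht]
  simp only [ContinuousLinearMap.map_smul_of_tower]

open MeasureTheory in
/-- Variation-of-constants formula relating the full dynamics `ψ' = (A + u B)ψ` to its
Galerkin approximation: `π_N Υ_t ψ₀ = X(t,0)π_N ψ₀ + ∫₀ᵗ u(s) X(t,s) π_N B (Id − π_N) Υ_s ψ₀ ds`. -/
theorem stmt8 {H : Type*} [NormedAddCommGroup H] [InnerProductSpace ℂ H] [CompleteSpace H]
    (A B : H →L[ℂ] H) (u : ℝ → ℝ) (T : ℝ) (hT : 0 ≤ T)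
    (hu : IntervalIntegrable u volume 0 T)
    (P : H →L[ℂ] H) (hP1 : P ∘L P = P) (hP2 : ContinuousLinearMap.adjoint P = P)
    (hPA : P ∘L A = A ∘L P)
    (ψ₀ : H) (Υ : ℝ → H)
    (hΥ : ∀ t ∈ Set.Icc (0:ℝ) T,
      Υ t = ψ₀ + ∫ s in (0:ℝ)..t, (A (Υ s) + u s • B (Υ s)))
    (X : ℝ → ℝ → (H →L[ℂ] H))
    (hXunit : ∀ t s : ℝ, ∀ ψ : H, ‖X t s ψ‖ = ‖ψ‖)
    (hXcoc : ∀ t s r : ℝ, (X t s) ∘L (X s r) = X t r)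
    (hXid : ∀ t : ℝ, X t t = 1)
    (hX : ∀ s : ℝ, ∀ ψ : H, ∀ t ∈ Set.Icc (0:ℝ) T,
      X t s ψ = ψ + ∫ r in s..t,
        ((P ∘L A ∘L P) (X r s ψ) + u r • (P ∘L B ∘L P) (X r s ψ))) :
    ∀ t ∈ Set.Icc (0:ℝ) T,
      P (Υ t) = X t 0 (P ψ₀)
        + ∫ s in (0:ℝ)..t, u s • (X t s ((P ∘L B ∘L (1 - P)) (Υ s))) :=
  stmt8_general A B u T hT hu P hP1 hPA ψ₀ Υ hΥ X hXunit hXcoc hX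
end

section
/- Suppose ‖πX(t,s) − X(t,s)π‖ ≤ 2η for all s,t in [0,T] with X(t,s) unitary, ‖π B(Id−π_N)‖ ≤ δ, ‖B‖ < ∞, and π Υ_t ψ − π X(t,0)ψ = ∫₀^t u(s)[πX(t,s)]π_N B(Id−π_N)Υ_s ψ ds where Υ_s is unitary and π ≤ π_N (π π_N = π). Then ‖π Υ_t ψ − π X(t,0) ψ‖ ≤ (∫₀^T |u|)·(δ + 2η‖B‖) for all t in [0,T] and unit vectors ψ. -/
/-!
Since `π π_N = π`, the integrand operator splits as
`π X(t,s) π_N B (1 - π_N) = X(t,s) π B (1 - π_N) + (π X(t,s) - X(t,s) π) π_N B (1 - π_N)`.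
Unitarity of `X` and contractivity of the projections bound its norm by `δ + 2η‖B‖`;
unitarity of `Υ` and `‖ψ‖ = 1` then bound the integrand of the variation-of-constants
formula by `|u(s)| (δ + 2η‖B‖)`, and integrating over `[0, t] ⊆ [0, T]` gives the estimate.
-/

open MeasureTheory Set

theorem norm_intervalIntegral_smul_le {E : Type*} [NormedAddCommGroup E] [NormedSpace ℝ E]
    {u : ℝ → ℝ} {F : ℝ → E} {C t T : ℝ} (hu : IntervalIntegrable u volume 0 T)
    (ht : t ∈ Icc 0 T) (hF : ∀ s ∈ Icc 0 T, ‖F s‖ ≤ C) :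
    ‖∫ s in (0 : ℝ)..t, u s • F s‖ ≤ (∫ s in (0 : ℝ)..T, |u s|) * C := by
  have hC : 0 ≤ C := (norm_nonneg _).trans (hF 0 ⟨le_rfl, ht.1.trans ht.2⟩)
  have hbound : IntervalIntegrable (fun s => |u s| * C) volume 0 T := hu.abs.mul_const C
  calc ‖∫ s in (0 : ℝ)..t, u s • F s‖ ≤ ∫ s in (0 : ℝ)..t, |u s| * C := by
        refine intervalIntegral.norm_integral_le_of_norm_le ht.1 (ae_of_all _ fun s hs => ?_)
          (hbound.mono_set (uIcc_subset_uIcc_left (Icc_subset_uIcc ht)))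
        rw [norm_smul, Real.norm_eq_abs]
        exact mul_le_mul_of_nonneg_left (hF s ⟨hs.1.le, hs.2.trans ht.2⟩) (abs_nonneg _)
    _ ≤ ∫ s in (0 : ℝ)..T, |u s| * C :=
        intervalIntegral.integral_mono_interval le_rfl ht.1 ht.2
          (ae_of_all _ fun s => by positivity) hbound
    _ = (∫ s in (0 : ℝ)..T, |u s|) * C := intervalIntegral.integral_mul_const C _

theorem norm_mul_mul_mul_mul_one_sub_le {A : Type*} [NormedRing A] [StarRing A] [CStarRing A]
    {P X Q B : A} (hPQ : P * Q = P) (hQ : IsStarProjection Q) (hX : ‖X‖ ≤ 1) :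
    ‖P * (X * (Q * (B * (1 - Q))))‖ ≤ ‖P * (B * (1 - Q))‖ + ‖P * X - X * P‖ * ‖B‖ := by
  set Y := B * (1 - Q)
  have hPQY : P * (Q * Y) = P * Y := by rw [← mul_assoc, hPQ]
  have hsplit : P * (X * (Q * Y)) = X * (P * Y) + (P * X - X * P) * (Q * Y) := by
    rw [sub_mul, mul_assoc X P, hPQY]; noncomm_ring
  have hQY : ‖Q * Y‖ ≤ ‖B‖ :=
    calc ‖Q * Y‖ ≤ ‖Q‖ * (‖B‖ * ‖1 - Q‖) :=
          (norm_mul_le _ _).trans (by gcongr; exact norm_mul_le _ _)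
      _ ≤ 1 * (‖B‖ * 1) := by gcongr; exacts [hQ.norm_le, hQ.one_sub.norm_le]
      _ = ‖B‖ := by ring
  calc ‖P * (X * (Q * Y))‖ ≤ ‖X‖ * ‖P * Y‖ + ‖P * X - X * P‖ * ‖Q * Y‖ := by
        rw [hsplit]; exact (norm_add_le _ _).trans (add_le_add (norm_mul_le _ _) (norm_mul_le _ _))
    _ ≤ 1 * ‖P * Y‖ + ‖P * X - X * P‖ * ‖B‖ := by gcongr
    _ = ‖P * Y‖ + ‖P * X - X * P‖ * ‖B‖ := by ring

theorem stmt16_general {H : Type*} [NormedAddCommGroup H] [InnerProductSpace ℂ H] [CompleteSpace H]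
    (T η δ : ℝ)
    (u : ℝ → ℝ) (hu : IntervalIntegrable u volume 0 T)
    (B P Q : H →L[ℂ] H)
    (hPQ : P ∘L Q = P)
    (hQ1 : Q ∘L Q = Q) (hQ2 : ContinuousLinearMap.adjoint Q = Q)
    (X : ℝ → ℝ → (H →L[ℂ] H))
    (hXu : ∀ t s : ℝ, ∀ ψ : H, ‖X t s ψ‖ = ‖ψ‖)
    (hcomm : ∀ t ∈ Set.Icc (0:ℝ) T, ∀ s ∈ Set.Icc (0:ℝ) T,
      ‖P ∘L (X t s) - (X t s) ∘L P‖ ≤ 2 * η)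
    (hδ : ‖P ∘L B ∘L (1 - Q)‖ ≤ δ)
    (Υ : ℝ → (H →L[ℂ] H)) (hΥu : ∀ s : ℝ, ∀ ψ' : H, ‖Υ s ψ'‖ = ‖ψ'‖)
    (ψ : H) (hψ : ‖ψ‖ = 1)
    (hid : ∀ t ∈ Set.Icc (0:ℝ) T,
      P (Υ t ψ) - P (X t 0 ψ)
        = ∫ s in (0:ℝ)..t, u s • ((P ∘L (X t s) ∘L Q ∘L B ∘L (1 - Q)) (Υ s ψ))) :
    ∀ t ∈ Set.Icc (0:ℝ) T,
      ‖P (Υ t ψ) - P (X t 0 ψ)‖ ≤ (∫ s in (0:ℝ)..T, |u s|) * (δ + 2 * η * ‖B‖) := by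
  intro t ht
  have hQ : IsStarProjection Q := ⟨hQ1, (ContinuousLinearMap.star_eq_adjoint Q).trans hQ2⟩
  rw [hid t ht]
  refine norm_intervalIntegral_smul_le hu ht fun s hs => ?_
  have hX : ‖X t s‖ ≤ 1 := ContinuousLinearMap.opNorm_le_bound _ zero_le_one (by simp [hXu])
  calc ‖(P ∘L X t s ∘L Q ∘L B ∘L (1 - Q)) (Υ s ψ)‖ ≤ ‖P ∘L X t s ∘L Q ∘L B ∘L (1 - Q)‖ :=
        ((P ∘L X t s ∘L Q ∘L B ∘L (1 - Q)).le_opNorm _).trans_eq (by rw [hΥu, hψ, mul_one])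
    _ ≤ ‖P ∘L B ∘L (1 - Q)‖ + ‖P ∘L X t s - X t s ∘L P‖ * ‖B‖ :=
        norm_mul_mul_mul_mul_one_sub_le hPQ hQ hX
    _ ≤ δ + 2 * η * ‖B‖ := by gcongr; exact hcomm t ht s hs

open MeasureTheory in
/-- Abstract form of the paper's key estimate: from the commutator bound
`‖πX(t,s) − X(t,s)π‖ ≤ 2η`, the truncation bound `‖πB(Id−π_N)‖ ≤ δ`, unitarity, `π ≤ π_N`,
and the variation-of-constants identity, one gets
`‖πΥ_t ψ − πX(t,0)ψ‖ ≤ (∫₀ᵀ|u|)(δ + 2η‖B‖)` for unit vectors `ψ`. -/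
theorem stmt16 {H : Type*} [NormedAddCommGroup H] [InnerProductSpace ℂ H] [CompleteSpace H]
    (T η δ : ℝ) (hT : 0 ≤ T) (hη : 0 < η)
    (u : ℝ → ℝ) (hu : IntervalIntegrable u volume 0 T)
    (B P Q : H →L[ℂ] H)
    (hPQ : P ∘L Q = P)
    (hP1 : P ∘L P = P) (hP2 : ContinuousLinearMap.adjoint P = P)
    (hQ1 : Q ∘L Q = Q) (hQ2 : ContinuousLinearMap.adjoint Q = Q)
    (X : ℝ → ℝ → (H →L[ℂ] H))
    (hXu : ∀ t s : ℝ, ∀ ψ : H, ‖X t s ψ‖ = ‖ψ‖)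
    (hcomm : ∀ t ∈ Set.Icc (0:ℝ) T, ∀ s ∈ Set.Icc (0:ℝ) T,
      ‖P ∘L (X t s) - (X t s) ∘L P‖ ≤ 2 * η)
    (hδ : ‖P ∘L B ∘L (1 - Q)‖ ≤ δ)
    (Υ : ℝ → (H →L[ℂ] H)) (hΥu : ∀ s : ℝ, ∀ ψ' : H, ‖Υ s ψ'‖ = ‖ψ'‖)
    (ψ : H) (hψ : ‖ψ‖ = 1)
    (hid : ∀ t ∈ Set.Icc (0:ℝ) T,
      P (Υ t ψ) - P (X t 0 ψ)
        = ∫ s in (0:ℝ)..t, u s • ((P ∘L (X t s) ∘L Q ∘L B ∘L (1 - Q)) (Υ s ψ))) :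
    ∀ t ∈ Set.Icc (0:ℝ) T,
      ‖P (Υ t ψ) - P (X t 0 ψ)‖ ≤ (∫ s in (0:ℝ)..T, |u s|) * (δ + 2 * η * ‖B‖) :=
  stmt16_general T η δ u hu B P Q hPQ hQ1 hQ2 X hXu hcomm hδ Υ hΥu ψ hψ hid
end
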